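/- arXiv:2512.07377 — 3 statements merged into one kernel-verified Lean document; each statement's English description precedes it below -/
import Mathlib

section
/- Safeguarded iteration converges linearly: suppose γ ≤ γ' < 1 and a sequence (v_k) in ℝ^S satisfies, for every k, either ‖v_{k+1} − T(v_{k+1})‖_∞ ≤ (γ')^{k+1} ‖v_0 − T(v_0)‖_∞ or v_{k+1} = T(v_k). Then for all k ≥ 0, ‖v_k − T(v_k)‖_∞ ≤ (γ')^k ‖v_0 − T(v_0)‖_∞, and consequently ‖v_k − v⋆‖_∞ ≤ (γ')^k ‖v_0 − T(v_0)‖_∞ / (1−γ), where v⋆ is the unique fixed point of T. -/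
/-!
A plain step `v (k+1) = T (v k)` shrinks the residual `‖v - T v‖` by the contraction factor
`γ ≤ γ'`, while a safeguarded step meets the bound `γ' ^ (k+1) * ‖v 0 - T (v 0)‖` outright, so the
residual bound holds by induction. The a posteriori estimate `‖x - v⋆‖ ≤ ‖x - T x‖ / (1 - γ)` for
contractions then turns it into the bound on the distance to the fixed point.
-/

section SafeguardedIteration

variable {E : Type*} [NormedAddCommGroup E] {T : E → E} {γ γ' : ℝ}

theorem contractingWith_of_norm_sub_le (hγ0 : 0 ≤ γ) (hγ1 : γ < 1)
    (hT : ∀ v w : E, ‖T v - T w‖ ≤ γ * ‖v - w‖) : ContractingWith ⟨γ, hγ0⟩ T :=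
  ⟨hγ1, LipschitzWith.of_dist_le_mul fun v w => by
    rw [dist_eq_norm, dist_eq_norm]
    exact hT v w⟩

theorem norm_sub_le_norm_sub_apply_div_of_isFixedPt (hγ0 : 0 ≤ γ) (hγ1 : γ < 1)
    (hT : ∀ v w : E, ‖T v - T w‖ ≤ γ * ‖v - w‖) {vstar : E} (hfix : T vstar = vstar) (x : E) :
    ‖x - vstar‖ ≤ ‖x - T x‖ / (1 - γ) := by
  rw [← dist_eq_norm, ← dist_eq_norm]
  exact (contractingWith_of_norm_sub_le hγ0 hγ1 hT).dist_le_of_fixedPoint x hfix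

theorem norm_sub_apply_le_pow_mul_of_safeguarded (hγ0 : 0 ≤ γ) (hγ'γ : γ ≤ γ')
    (hT : ∀ v w : E, ‖T v - T w‖ ≤ γ * ‖v - w‖) (v : ℕ → E)
    (hstep : ∀ k : ℕ,
      ‖v (k + 1) - T (v (k + 1))‖ ≤ γ' ^ (k + 1) * ‖v 0 - T (v 0)‖ ∨ v (k + 1) = T (v k))
    (k : ℕ) : ‖v k - T (v k)‖ ≤ γ' ^ k * ‖v 0 - T (v 0)‖ := by
  induction k with
  | zero => simp
  | succ n ih =>
    rcases hstep n with hsafe | hplain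
    · exact hsafe
    · rw [hplain]
      calc ‖T (v n) - T (T (v n))‖ ≤ γ * ‖v n - T (v n)‖ := hT _ _
        _ ≤ γ' * (γ' ^ n * ‖v 0 - T (v 0)‖) := by
          gcongr
          exact hγ0.trans hγ'γ
        _ = γ' ^ (n + 1) * ‖v 0 - T (v 0)‖ := by ring

end SafeguardedIteration

theorem safeguarded_iteration_converges_general
    {S : Type*} [Fintype S]
    (T : (S → ℝ) → (S → ℝ)) (γ γ' : ℝ) (hγ0 : 0 ≤ γ) (hγ1 : γ < 1)
    (hγ'γ : γ ≤ γ')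
    (hT : ∀ v w : S → ℝ, ‖T v - T w‖ ≤ γ * ‖v - w‖)
    (vstar : S → ℝ) (hfix : T vstar = vstar)
    (v : ℕ → (S → ℝ))
    (hstep : ∀ k : ℕ,
      ‖v (k + 1) - T (v (k + 1))‖ ≤ γ' ^ (k + 1) * ‖v 0 - T (v 0)‖
      ∨ v (k + 1) = T (v k)) :
    ∀ k : ℕ,
      ‖v k - T (v k)‖ ≤ γ' ^ k * ‖v 0 - T (v 0)‖ ∧
      ‖v k - vstar‖ ≤ γ' ^ k * ‖v 0 - T (v 0)‖ / (1 - γ) := by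
  intro k
  have hres := norm_sub_apply_le_pow_mul_of_safeguarded hγ0 hγ'γ hT v hstep k
  refine ⟨hres, ?_⟩
  calc ‖v k - vstar‖ ≤ ‖v k - T (v k)‖ / (1 - γ) :=
        norm_sub_le_norm_sub_apply_div_of_isFixedPt hγ0 hγ1 hT hfix (v k)
    _ ≤ γ' ^ k * ‖v 0 - T (v 0)‖ / (1 - γ) := by
        gcongr

/-- Safeguarded iteration converges linearly. -/
theorem safeguarded_iteration_converges
    {S : Type*} [Fintype S] [Nonempty S]
    (T : (S → ℝ) → (S → ℝ)) (γ γ' : ℝ) (hγ0 : 0 ≤ γ) (hγ1 : γ < 1)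
    (hγ'γ : γ ≤ γ') (hγ'1 : γ' < 1)
    (hT : ∀ v w : S → ℝ, ‖T v - T w‖ ≤ γ * ‖v - w‖)
    (vstar : S → ℝ) (hfix : T vstar = vstar)
    (v : ℕ → (S → ℝ))
    (hstep : ∀ k : ℕ,
      ‖v (k + 1) - T (v (k + 1))‖ ≤ γ' ^ (k + 1) * ‖v 0 - T (v 0)‖
      ∨ v (k + 1) = T (v k)) :
    ∀ k : ℕ,
      ‖v k - T (v k)‖ ≤ γ' ^ k * ‖v 0 - T (v 0)‖ ∧
      ‖v k - vstar‖ ≤ γ' ^ k * ‖v 0 - T (v 0)‖ / (1 - γ) :=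
  safeguarded_iteration_converges_general T γ γ' hγ0 hγ1 hγ'γ hT vstar hfix v hstep
end

section
/- Residual contraction for perturbed Bellman updates: let T be a γ-contraction in sup norm and let γ' ∈ (γ,1). If v_{k+1} = T(v_k) + w for a perturbation w ∈ ℝ^S satisfying ‖w‖_∞ ≤ ((γ'−γ)/(1+γ)) ‖v_k − T(v_k)‖_∞, then ‖v_{k+1} − T(v_{k+1})‖_∞ ≤ γ' ‖v_k − T(v_k)‖_∞. -/
theorem norm_sub_apply_perturbed_le {E : Type*} [SeminormedAddCommGroup E] {T : E → E}
    {γ : ℝ} (hγ : 0 ≤ γ) (hT : ∀ v w : E, ‖T v - T w‖ ≤ γ * ‖v - w‖) (v w : E) :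
    ‖(T v + w) - T (T v + w)‖ ≤ γ * ‖v - T v‖ + (1 + γ) * ‖w‖ :=
  calc ‖(T v + w) - T (T v + w)‖ = ‖w + (T v - T (T v + w))‖ := by congr 1; abel
    _ ≤ ‖w‖ + γ * ‖(v - T v) - w‖ := by
      rw [← sub_add_eq_sub_sub]; exact norm_add_le_of_le le_rfl (hT _ _)
    _ ≤ ‖w‖ + γ * (‖v - T v‖ + ‖w‖) := by gcongr; exact norm_sub_le _ _
    _ = γ * ‖v - T v‖ + (1 + γ) * ‖w‖ := by ring

theorem perturbed_update_residual_contraction_general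
    {S : Type*} [Fintype S]
    (T : (S → ℝ) → (S → ℝ)) (γ γ' : ℝ) (hγ0 : 0 ≤ γ)
    (hT : ∀ v w : S → ℝ, ‖T v - T w‖ ≤ γ * ‖v - w‖)
    (vk w : S → ℝ)
    (hw : ‖w‖ ≤ ((γ' - γ) / (1 + γ)) * ‖vk - T vk‖) :
    ‖(T vk + w) - T (T vk + w)‖ ≤ γ' * ‖vk - T vk‖ := by
  have hw' : (1 + γ) * ‖w‖ ≤ (γ' - γ) * ‖vk - T vk‖ := by
    rwa [div_mul_eq_mul_div, le_div_iff₀' (by linarith)] at hw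
  linarith [norm_sub_apply_perturbed_le hγ0 hT vk w]

/-- Residual contraction for perturbed Bellman updates. -/
theorem perturbed_update_residual_contraction
    {S : Type*} [Fintype S] [Nonempty S]
    (T : (S → ℝ) → (S → ℝ)) (γ γ' : ℝ) (hγ0 : 0 ≤ γ) (hγ1 : γ < 1)
    (hγ'γ : γ < γ') (hγ'1 : γ' < 1)
    (hT : ∀ v w : S → ℝ, ‖T v - T w‖ ≤ γ * ‖v - w‖)
    (vk w : S → ℝ)
    (hw : ‖w‖ ≤ ((γ' - γ) / (1 + γ)) * ‖vk - T vk‖) :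
    ‖(T vk + w) - T (T vk + w)‖ ≤ γ' * ‖vk - T vk‖ :=
  perturbed_update_residual_contraction_general T γ γ' hγ0 hT vk w hw
end

section
/- The mellow-max (log-sum-exp average) operator is non-expansive: for ω > 0 and finite A, the map mm_ω : ℝ^A → ℝ defined by mm_ω(q) = −(1/ω) log( (1/|A|) ∑_{a∈A} exp(−ω q(a)) ) satisfies |mm_ω(q) − mm_ω(q')| ≤ max_{a∈A} |q(a) − q'(a)| for all q, q' ∈ ℝ^A. -/
/-!
Mellowmax is monotone and commutes with adding a constant to all coordinates. Any such
functional `f` is non-expansive for the sup distance: `q ≤ q' + M` pointwise gives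
`f q ≤ f (q' + M) = f q' + M`, and symmetrically.
-/

open Finset Real

theorem abs_sub_le_of_monotone_of_map_add_const {A : Type*} {f : (A → ℝ) → ℝ}
    (hf : Monotone f) (hf_add : ∀ q (c : ℝ), f (q + Function.const A c) = f q + c)
    {q q' : A → ℝ} {M : ℝ} (hM : ∀ a, |q a - q' a| ≤ M) : |f q - f q'| ≤ M := by
  have le_add : ∀ u v : A → ℝ, (∀ a, |u a - v a| ≤ M) → f u ≤ f v + M := fun u v h =>
    calc f u ≤ f (v + Function.const A M) := hf fun a => by
            simp only [Pi.add_apply, Function.const_apply]; linarith [(abs_le.1 (h a)).2]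
      _ = f v + M := hf_add v M
  rw [abs_le]
  constructor
  · linarith [le_add q' q fun a => abs_sub_comm (q a) (q' a) ▸ hM a]
  · linarith [le_add q q' hM]

noncomputable def mellowmax {A : Type*} [Fintype A] (ω : ℝ) (q : A → ℝ) : ℝ :=
  -(1 / ω) * log ((1 / (Fintype.card A : ℝ)) * ∑ a, exp (-ω * q a))

section Mellowmax

variable {A : Type*} [Fintype A] [Nonempty A] {ω : ℝ}

theorem mellowmax_monotone (hω : 0 < ω) : Monotone (mellowmax (A := A) ω) := by
  intro q q' h
  have hsum : ∑ a, exp (-ω * q' a) ≤ ∑ a, exp (-ω * q a) :=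
    sum_le_sum fun a _ => exp_le_exp.2 (by nlinarith [h a])
  have hpos : 0 < ∑ a, exp (-ω * q' a) := sum_pos (fun a _ => exp_pos _) univ_nonempty
  have hlog := log_le_log (by positivity) (mul_le_mul_of_nonneg_left hsum
    (by positivity : (0 : ℝ) ≤ 1 / (Fintype.card A : ℝ)))
  exact mul_le_mul_of_nonpos_left hlog (by simp only [neg_nonpos]; positivity)

theorem mellowmax_add_const (hω : ω ≠ 0) (q : A → ℝ) (c : ℝ) :
    mellowmax ω (q + Function.const A c) = mellowmax ω q + c := by
  have hsum : ∑ a, exp (-ω * (q + Function.const A c) a) =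
      exp (-ω * c) * ∑ a, exp (-ω * q a) := by
    rw [mul_sum]
    refine sum_congr rfl fun a _ => ?_
    rw [← exp_add, Pi.add_apply, Function.const_apply]
    ring_nf
  have hpos : 0 < (1 / (Fintype.card A : ℝ)) * ∑ a, exp (-ω * q a) :=
    mul_pos (by positivity) (sum_pos (fun a _ => exp_pos _) univ_nonempty)
  rw [mellowmax, mellowmax, hsum, mul_left_comm, log_mul (exp_pos _).ne' hpos.ne', log_exp]
  field_simp
  ring

end Mellowmax

/-- The mellow-max operator is non-expansive in the sup norm. -/
theorem mellowmax_nonexpansive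
    {A : Type*} [Fintype A] [Nonempty A]
    (ω : ℝ) (hω : 0 < ω)
    (mm : (A → ℝ) → ℝ)
    (hmm : ∀ q : A → ℝ, mm q =
      -(1 / ω) * Real.log ((1 / (Fintype.card A : ℝ)) * ∑ a, Real.exp (-ω * q a))) :
    ∀ q q' : A → ℝ,
      |mm q - mm q'| ≤ Finset.univ.sup' Finset.univ_nonempty (fun a => |q a - q' a|) := by
  obtain rfl : mm = mellowmax ω := funext hmm
  intro q q'
  exact abs_sub_le_of_monotone_of_map_add_const (mellowmax_monotone hω)
    (mellowmax_add_const hω.ne') fun a => le_sup' (fun a => |q a - q' a|) (mem_univ a)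
end
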